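/- Fundamental lemma for run sets: if x_1:ω_1, …, x_k:ω_k ⊢ M : τ, then for any terms W_1 ∈ ⟦ω_1⟧, …, W_k ∈ ⟦ω_k⟧, the simultaneous substitution {W_1/x_1, …, W_k/x_k}M is in ⟦τ⟧. -/

import Mathlib

/-- Terms of the sequential λ-calculus in de Bruijn representation
(so terms are automatically identified up to α-equivalence):
nil `*`, variable prefix `x.M`, push/application `[N].M`,
and pop/abstraction `<x>.M`. -/
inductive STm : Type
  | star : STm
  | var  : Nat → STm → STm
  | push : STm → STm → STm
  | pop  : STm → STm

namespace STm

/-- Lifting of a renaming under a binder. -/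
def liftF (f : Nat → Nat) : Nat → Nat
  | 0 => 0
  | n+1 => f n + 1

/-- Renaming of de Bruijn indices. -/
def rename (f : Nat → Nat) : STm → STm
  | star => star
  | var n M => var (f n) (rename f M)
  | push N M => push (rename f N) (rename f M)
  | pop M => pop (rename (liftF f) M)

/-- Capture-avoiding composition `N ; M`. -/
def comp : STm → STm → STm
  | star, P => P
  | var n N, P => var n (comp N P)
  | push Q N, P => push Q (comp N P)
  | pop N, P => pop (comp N (rename Nat.succ P))

/-- Lifting of a substitution under a binder. -/
def liftS (σ : Nat → STm) : Nat → STm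
  | 0 => var 0 star
  | n+1 => rename Nat.succ (σ n)

/-- Capture-avoiding simultaneous substitution; note
`{N/x}(x.M) = N ; {N/x}M`. -/
def subst (σ : Nat → STm) : STm → STm
  | star => star
  | var n M => comp (σ n) (subst σ M)
  | push N M => push (subst σ N) (subst σ M)
  | pop M => pop (subst (liftS σ) M)

/-- Capture-avoiding substitution `{N/x}M` of `N` for the variable bound
immediately outside `M`. -/
def subst1 (N : STm) : STm → STm :=
  subst (fun n => match n with | 0 => N | n+1 => var n star)

end STm

/-- Machine states: a stack of terms (written bottom-first, so the top
element is the last element of the list) together with a term. -/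
abbrev SState := List STm × STm

/-- The transitions of the sequential stack machine:
`(S, [N].M) → (S·N, M)` and `(S·N, <x>.M) → (S, {N/x}M)`. -/
inductive SMStep : SState → SState → Prop
  | push (S : List STm) (N M : STm) : SMStep (S, .push N M) (S ++ [N], M)
  | pop (S : List STm) (N M : STm) : SMStep (S ++ [N], .pop M) (S, STm.subst1 N M)

/-- A run of the sequential machine: a finite sequence of transitions. -/
def SRun : SState → SState → Prop := Relation.ReflTransGen SMStep

/-- Sequential types `ρ_n…ρ_1 ⟹ τ_1…τ_m`: an implication between two
finite vectors of sequential types. The first list is the input vector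
as written (i.e. `arr (rev ρ⃗) τ⃗` represents `rev(ρ⃗) ⟹ τ⃗`). -/
inductive STy : Type
  | arr : List STy → List STy → STy

/-- Typing judgments `Γ ⊢ M : τ` of the sequential λ-calculus, with the
context `Γ` a finite map from (de Bruijn) variables to types, given as a
list. -/
inductive Typing : List STy → STm → STy → Prop
  | star (Γ : List STy) (τs : List STy) :
      Typing Γ .star (.arr τs.reverse τs)
  | var (Γ : List STy) (n : Nat) (M : STm) (ρs σs τs υs : List STy) :
      Γ[n]? = some (.arr ρs.reverse σs) →
      Typing Γ M (.arr (σs.reverse ++ τs.reverse) υs) →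
      Typing Γ (.var n M) (.arr (ρs.reverse ++ τs.reverse) υs)
  | abs (Γ : List STy) (M : STm) (ρ : STy) (σs τs : List STy) :
      Typing (ρ :: Γ) M (.arr σs.reverse τs) →
      Typing Γ (.pop M) (.arr (ρ :: σs.reverse) τs)
  | app (Γ : List STy) (N M : STm) (ρ : STy) (σs τs : List STy) :
      Typing Γ N ρ →
      Typing Γ M (.arr (ρ :: σs.reverse) τs) →
      Typing Γ (.push N M) (.arr σs.reverse τs)

mutual
/-- The run set `⟦τ⟧` of a sequential type `τ = rev(σ⃗) ⟹ τ⃗`: the terms `M`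
such that for every stack `S ∈ ⟦σ⃗⟧` there are a stack `T ∈ ⟦τ⃗⟧` and a
machine run `(S,M) ⇓ (T,*)`. -/
def RunSet : STy → STm → Prop
  | .arr ins outs => fun M =>
      ∀ S : List STm, StackSet ins S.reverse →
        ∃ T : List STm, StackSet outs T ∧ SRun (S, M) (T, .star)
/-- The set `⟦τ_1…τ_n⟧` of stacks `ε·N_1·…·N_n` with each `N_i ∈ ⟦τ_i⟧`
(the type vector and the stack both listed bottom-first). -/
def StackSet : List STy → List STm → Prop
  | [], S => S = []
  | _ :: _, [] => False
  | τ :: τs, N :: S => RunSet τ N ∧ StackSet τs S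
end

/-!
Induction on the typing derivation, with the substitution for the context extended under each
binder. Each typing rule is sound for run sets: `[N].M` starts by pushing `N`; `<x>.M` pops the
top of the stack and performs exactly the substitution the induction hypothesis covers; and
`x.M` becomes `W ; M`, which runs like `W` on the top part of the stack (the rest being an inert
frame) followed by `M` on what `W` leaves behind.
-/

namespace STm

def scons (N : STm) (σ : Nat → STm) : Nat → STm
  | 0 => N
  | n + 1 => σ n

theorem liftF_comp (f g : Nat → Nat) :
    (fun n => liftF f (liftF g n)) = liftF (fun n => f (g n)) := by
  funext n; cases n <;> rfl

theorem rename_rename (f g : Nat → Nat) (t : STm) :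
    rename f (rename g t) = rename (fun n => f (g n)) t := by
  induction t generalizing f g with
  | star => rfl
  | var n M ih => simp [rename, ih]
  | push N M ihN ihM => simp [rename, ihN, ihM]
  | pop M ih => simp [rename, ih, liftF_comp]

theorem rename_comp (f : Nat → Nat) (A B : STm) :
    rename f (comp A B) = comp (rename f A) (rename f B) := by
  induction A generalizing f B with
  | star => rfl
  | var n M ih => simp [comp, rename, ih]
  | push N M _ ihM => simp [comp, rename, ihM]
  | pop M ih =>
    simp only [comp, rename, ih, rename_rename]
    rfl

theorem comp_assoc (A B C : STm) : comp (comp A B) C = comp A (comp B C) := by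
  induction A generalizing B C with
  | star => rfl
  | var n M ih => simp [comp, ih]
  | push N M _ ihM => simp [comp, ihM]
  | pop M ih => simp [comp, ih, rename_comp]

theorem comp_star (A : STm) : comp A star = A := by
  induction A with
  | star => rfl
  | var n M ih => simp [comp, ih]
  | push N M _ ihM => simp [comp, ihM]
  | pop M ih => simp [comp, rename, ih]

theorem liftS_liftF (σ : Nat → STm) (f : Nat → Nat) :
    (fun n => liftS σ (liftF f n)) = liftS (fun n => σ (f n)) := by
  funext n; cases n <;> rfl

theorem subst_rename (σ : Nat → STm) (f : Nat → Nat) (t : STm) :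
    subst σ (rename f t) = subst (fun n => σ (f n)) t := by
  induction t generalizing σ f with
  | star => rfl
  | var n M ih => simp [rename, subst, ih]
  | push N M ihN ihM => simp [rename, subst, ihN, ihM]
  | pop M ih => simp [rename, subst, ih, liftS_liftF]

theorem rename_liftF_liftS (f : Nat → Nat) (σ : Nat → STm) :
    (fun n => rename (liftF f) (liftS σ n)) = liftS (fun n => rename f (σ n)) := by
  funext n
  cases n with
  | zero => rfl
  | succ n => simp only [liftS, rename_rename]; rfl

theorem rename_subst (f : Nat → Nat) (σ : Nat → STm) (t : STm) :
    rename f (subst σ t) = subst (fun n => rename f (σ n)) t := by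
  induction t generalizing σ f with
  | star => rfl
  | var n M ih => simp [subst, ih, rename_comp]
  | push N M ihN ihM => simp [rename, subst, ihN, ihM]
  | pop M ih => simp [rename, subst, ih, rename_liftF_liftS]

theorem subst_comp (σ : Nat → STm) (A B : STm) :
    subst σ (comp A B) = comp (subst σ A) (subst σ B) := by
  induction A generalizing σ B with
  | star => rfl
  | var n M ih => simp [comp, subst, ih, comp_assoc]
  | push N M _ ihM => simp [comp, subst, ihM]
  | pop M ih =>
    simp only [comp, subst, ih, subst_rename, rename_subst]
    rfl

theorem liftS_var_star : liftS (fun n => var n star) = fun n => var n star := by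
  funext n; cases n <;> rfl

theorem subst_var_star (t : STm) : subst (fun n => var n star) t = t := by
  induction t with
  | star => rfl
  | var n M ih => simp [subst, comp, ih]
  | push N M ihN ihM => simp [subst, ihN, ihM]
  | pop M ih => simp [subst, liftS_var_star, ih]

theorem subst_liftS_liftS (f g : Nat → STm) :
    (fun n => subst (liftS f) (liftS g n)) = liftS (fun n => subst f (g n)) := by
  funext n
  cases n with
  | zero => rfl
  | succ n => simp [liftS, subst_rename, rename_subst]

theorem subst_subst (f g : Nat → STm) (t : STm) :
    subst f (subst g t) = subst (fun n => subst f (g n)) t := by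
  induction t generalizing f g with
  | star => rfl
  | var n M ih => simp [subst, ih, subst_comp]
  | push N M ihN ihM => simp [subst, ihN, ihM]
  | pop M ih => simp [subst, ih, subst_liftS_liftS]

theorem subst1_eq_subst_scons (N : STm) : subst1 N = subst (scons N fun n => var n star) := by
  congr 1

theorem subst1_rename_succ (N P : STm) : subst1 N (rename Nat.succ P) = P := by
  rw [subst1_eq_subst_scons, subst_rename]
  exact subst_var_star P

theorem subst1_subst_liftS (N : STm) (σ : Nat → STm) (M : STm) :
    subst1 N (subst (liftS σ) M) = subst (scons N σ) M := by
  rw [subst1, subst_subst]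
  congr 1
  funext n
  cases n with
  | zero => exact comp_star N
  | succ n => exact subst1_rename_succ N (σ n)

theorem scons_getD (N : STm) (Ws : List STm) :
    scons N (fun i => Ws.getD i star) = fun i => (N :: Ws).getD i star := by
  funext n; cases n <;> rfl

end STm

theorem SMStep.comp_right {s s' : SState} (h : SMStep s s') (P : STm) :
    SMStep (s.1, STm.comp s.2 P) (s'.1, STm.comp s'.2 P) := by
  cases h with
  | push S N M => exact SMStep.push S N (STm.comp M P)
  | pop S N M =>
    have step := SMStep.pop S N (STm.comp M (STm.rename Nat.succ P))
    rwa [STm.subst1, STm.subst_comp, ← STm.subst1, STm.subst1_rename_succ] at step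

theorem SRun.comp_right {s t : SState} (h : SRun s t) (P : STm) :
    SRun (s.1, STm.comp s.2 P) (t.1, STm.comp t.2 P) := by
  induction h with
  | refl => exact .refl
  | tail _ hstep ih => exact .tail ih (hstep.comp_right P)

theorem SMStep.frame {s s' : SState} (h : SMStep s s') (U : List STm) :
    SMStep (U ++ s.1, s.2) (U ++ s'.1, s'.2) := by
  cases h with
  | push S N M => simpa using SMStep.push (U ++ S) N M
  | pop S N M => simpa using SMStep.pop (U ++ S) N M

theorem SRun.frame {s t : SState} (h : SRun s t) (U : List STm) :
    SRun (U ++ s.1, s.2) (U ++ t.1, t.2) := by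
  induction h with
  | refl => exact .refl
  | tail _ hstep ih => exact .tail ih (hstep.frame U)

theorem SRun.frame_comp {S T : List STm} {N : STm} (h : SRun (S, N) (T, .star))
    (U : List STm) (M : STm) : SRun (U ++ S, STm.comp N M) (U ++ T, M) :=
  (h.frame U).comp_right M

theorem List.Forall₂.exists_append_of_left {α β : Type*} {R : α → β → Prop}
    {A B : List α} {S : List β} (h : List.Forall₂ R (A ++ B) S) :
    ∃ S₁ S₂, S = S₁ ++ S₂ ∧ List.Forall₂ R A S₁ ∧ List.Forall₂ R B S₂ := by
  refine ⟨S.take A.length, S.drop A.length, (List.take_append_drop _ _).symm, ?_, ?_⟩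
  · simpa using List.forall₂_take A.length h
  · simpa using List.forall₂_drop A.length h

theorem List.Forall₂.getD_of_getElem? {α β : Type*} {R : α → β → Prop}
    {l₁ : List α} {l₂ : List β} (h : List.Forall₂ R l₁ l₂) (d : β) {n : Nat} {a : α}
    (ha : l₁[n]? = some a) : R a (l₂.getD n d) := by
  induction h generalizing n with
  | nil => simp at ha
  | cons hR _ ih =>
    cases n with
    | zero => simp_all
    | succ n => exact ih (by simpa using ha)

theorem stackSet_iff_forall₂ : ∀ (τs : List STy) (S : List STm),
    StackSet τs S ↔ List.Forall₂ RunSet τs S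
  | [], [] => by simp [StackSet]
  | [], _ :: _ => by simp [StackSet]
  | _ :: _, [] => by simp [StackSet]
  | τ :: τs, N :: S => by simp [StackSet, stackSet_iff_forall₂ τs S]

theorem runSet_arr_reverse_iff (σs τs : List STy) (M : STm) :
    RunSet (.arr σs.reverse τs) M ↔ ∀ S : List STm, List.Forall₂ RunSet σs S →
      ∃ T, List.Forall₂ RunSet τs T ∧ SRun (S, M) (T, .star) := by
  simp [RunSet, stackSet_iff_forall₂, List.forall₂_reverse_iff]

theorem runSet_star (τs : List STy) : RunSet (.arr τs.reverse τs) .star :=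
  (runSet_arr_reverse_iff _ _ _).mpr fun S hS => ⟨S, hS, .refl⟩

theorem runSet_push {ρ : STy} {σs τs : List STy} {N M : STm} (hN : RunSet ρ N)
    (hM : RunSet (.arr (ρ :: σs.reverse) τs) M) :
    RunSet (.arr σs.reverse τs) (.push N M) := by
  rw [show ρ :: σs.reverse = (σs ++ [ρ]).reverse by simp, runSet_arr_reverse_iff] at hM
  rw [runSet_arr_reverse_iff]
  intro S hS
  obtain ⟨T, hT, hrun⟩ := hM (S ++ [N]) (List.rel_append hS (.cons hN .nil))
  exact ⟨T, hT, .head (SMStep.push S N M) hrun⟩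

theorem runSet_pop {ρ : STy} {σs τs : List STy} {M : STm}
    (hM : ∀ N, RunSet ρ N → RunSet (.arr σs.reverse τs) (STm.subst1 N M)) :
    RunSet (.arr (ρ :: σs.reverse) τs) (.pop M) := by
  rw [show ρ :: σs.reverse = (σs ++ [ρ]).reverse by simp, runSet_arr_reverse_iff]
  intro S hS
  obtain ⟨S', _, rfl, hS', _ | ⟨hN, _ | _⟩⟩ := hS.exists_append_of_left
  obtain ⟨T, hT, hrun⟩ := (runSet_arr_reverse_iff _ _ _).mp (hM _ hN) S' hS'
  exact ⟨T, hT, .head (SMStep.pop S' _ M) hrun⟩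

theorem runSet_comp {ρs σs τs υs : List STy} {N M : STm}
    (hN : RunSet (.arr ρs.reverse σs) N)
    (hM : RunSet (.arr (σs.reverse ++ τs.reverse) υs) M) :
    RunSet (.arr (ρs.reverse ++ τs.reverse) υs) (STm.comp N M) := by
  rw [← List.reverse_append, runSet_arr_reverse_iff] at hM ⊢
  rw [runSet_arr_reverse_iff] at hN
  intro S hS
  obtain ⟨S₁, S₂, rfl, hS₁, hS₂⟩ := hS.exists_append_of_left
  obtain ⟨T₀, hT₀, hrunN⟩ := hN S₂ hS₂
  obtain ⟨T, hT, hrunM⟩ := hM (S₁ ++ T₀) (List.rel_append hS₁ hT₀)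
  exact ⟨T, hT, (hrunN.frame_comp S₁ M).trans hrunM⟩

/-- Fundamental lemma for run sets: if `x_1:ω_1, …, x_k:ω_k ⊢ M : τ` and
`W_i ∈ ⟦ω_i⟧` for each `i`, then the simultaneous substitution
`{W_1/x_1, …, W_k/x_k}M` is in `⟦τ⟧`. -/
theorem seq_fundamental_lemma (Γ : List STy) (M : STm) (τ : STy) (Ws : List STm)
    (hM : Typing Γ M τ) (hWs : List.Forall₂ RunSet Γ Ws) :
    RunSet τ (STm.subst (fun i => Ws.getD i .star) M) := by
  induction hM generalizing Ws with
  | star Γ τs => exact runSet_star τs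
  | var Γ n M ρs σs τs υs hget _ ih =>
    exact runSet_comp (hWs.getD_of_getElem? .star hget) (ih Ws hWs)
  | abs Γ M ρ σs τs _ ih =>
    refine runSet_pop fun N hN => ?_
    rw [STm.subst1_subst_liftS, STm.scons_getD]
    exact ih (N :: Ws) (.cons hN hWs)
  | app Γ N M ρ σs τs _ _ ihN ihM => exact runSet_push (ihN Ws hWs) (ihM Ws hWs)
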